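/- arXiv:1409.1958 — 3 statements merged into one kernel-verified Lean document; each statement's English description precedes it below -/
import Mathlib

section
/- For bounded linear operators A, B on a Hilbert space H: if the closures of R(A*) and R(B*) intersect trivially and their (direct) sum is closed, then N(A) + N(B) = H; and if N(A) + N(B) = H, then R(A+B) = R(A) + R(B). -/
open ContinuousLinearMap

/-!
If `N(A) + N(B) = H`, write `x = a + b` with `a ∈ N(A)`, `b ∈ N(B)`; then `(A + B) b = A x`,
so `R(A) ⊆ R(A + B)`, and symmetrically for `B`.

For the first implication put `M = cl R(A*)` and `N = cl R(B*)`, so that `N(A) = Mᗮ` and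
`N(B) = Nᗮ`. Since `M ∩ N = 0` and `M ⊕ N` is closed, the projection of `M ⊕ N` onto `M` along `N`
is bounded; composed with the orthogonal projection onto `M ⊕ N` it gives an operator `T` with
`T = 1` on `M` and `T = 0` on `N`. Then `x = (x - T* x) + T* x` with `x - T* x ∈ Mᗮ` and
`T* x ∈ Nᗮ`.
-/

namespace LinearMap

variable {R M M₂ : Type*} [Semiring R] [AddCommMonoid M] [AddCommMonoid M₂] [Module R M]
  [Module R M₂]

theorem range_le_range_add_of_ker_sup_eq_top (f g : M →ₗ[R] M₂) (h : ker f ⊔ ker g = ⊤) :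
    range f ≤ range (f + g) := by
  rintro _ ⟨x, rfl⟩
  obtain ⟨a, ha, b, hb, rfl⟩ := Submodule.mem_sup.mp (h ▸ Submodule.mem_top : x ∈ ker f ⊔ ker g)
  exact ⟨b, by simp_all⟩

theorem range_add_eq_sup_of_ker_sup_eq_top (f g : M →ₗ[R] M₂) (h : ker f ⊔ ker g = ⊤) :
    range (f + g) = range f ⊔ range g :=
  le_antisymm (range_add_le f g) <| sup_le (range_le_range_add_of_ker_sup_eq_top f g h)
    (add_comm g f ▸ range_le_range_add_of_ker_sup_eq_top g f (sup_comm (ker f) (ker g) ▸ h))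

end LinearMap

namespace Submodule

variable {R M : Type*} [Ring R] [AddCommGroup M] [Module R M]

theorem isCompl_comap_subtype_sup {P Q : Submodule R M} (h : P ⊓ Q = ⊥) :
    IsCompl (P.comap (P ⊔ Q).subtype) (Q.comap (P ⊔ Q).subtype) := by
  constructor
  · rw [disjoint_iff, ← comap_inf, h, comap_bot, ker_subtype]
  · rw [codisjoint_iff]
    apply map_injective_of_injective (P ⊔ Q).injective_subtype
    rw [map_sup, map_comap_subtype, map_comap_subtype, map_subtype_top,
      inf_of_le_right le_sup_left, inf_of_le_right le_sup_right]

variable {𝕜 E : Type*} [RCLike 𝕜] [NormedAddCommGroup E] [InnerProductSpace 𝕜 E] [CompleteSpace E]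

theorem orthogonal_sup_orthogonal_eq_top_of_clm {P Q : Submodule 𝕜 E} (T : E →L[𝕜] E)
    (hP : ∀ x ∈ P, T x = x) (hQ : ∀ x ∈ Q, T x = 0) : Pᗮ ⊔ Qᗮ = ⊤ := by
  refine eq_top_iff.mpr fun x _ ↦ ?_
  rw [← sub_add_cancel x (adjoint T x)]
  refine add_mem_sup ((mem_orthogonal' _ _).mpr fun y hy ↦ ?_)
    ((mem_orthogonal' _ _).mpr fun y hy ↦ ?_)
  · rw [inner_sub_left, adjoint_inner_left, hP y hy, sub_self]
  · rw [adjoint_inner_left, hQ y hy, inner_zero_right]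

theorem exists_clm_eq_self_on_left_eq_zero_on_right {P Q : Submodule 𝕜 E} (hP : IsClosed (P : Set E))
    (hQ : IsClosed (Q : Set E)) (hPQ : P ⊓ Q = ⊥) (hK : IsClosed ((P ⊔ Q : Submodule 𝕜 E) : Set E)) :
    ∃ T : E →L[𝕜] E, (∀ x ∈ P, T x = x) ∧ ∀ x ∈ Q, T x = 0 := by
  set K := P ⊔ Q
  have := hK.completeSpace_coe
  have hc : (P.comap K.subtype).IsTopCompl (Q.comap K.subtype) :=
    IsCompl.isTopCompl_of_isClosed (isCompl_comap_subtype_sup hPQ)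
      (hP.preimage continuous_subtype_val) (hQ.preimage continuous_subtype_val)
  refine ⟨K.subtypeL ∘L (P.comap K.subtype).projectionL _ hc ∘L K.orthogonalProjectionOnto,
    fun x hx ↦ ?_, fun x hx ↦ ?_⟩
  · change K.subtype ((P.comap K.subtype).projectionL _ hc (K.orthogonalProjectionOnto x)) = x
    rw [orthogonalProjectionOnto_mem_subspace_eq_self ⟨x, mem_sup_left hx⟩,
      projectionL_apply_left hc ⟨_, hx⟩]
    rfl
  · change K.subtype ((P.comap K.subtype).projectionL _ hc (K.orthogonalProjectionOnto x)) = 0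
    rw [orthogonalProjectionOnto_mem_subspace_eq_self ⟨x, mem_sup_right hx⟩,
      projectionL_apply_right hc ⟨_, hx⟩, map_zero]

theorem orthogonal_sup_orthogonal_eq_top {P Q : Submodule 𝕜 E} (hP : IsClosed (P : Set E))
    (hQ : IsClosed (Q : Set E)) (hPQ : P ⊓ Q = ⊥) (hK : IsClosed ((P ⊔ Q : Submodule 𝕜 E) : Set E)) :
    Pᗮ ⊔ Qᗮ = ⊤ :=
  let ⟨T, hTP, hTQ⟩ := exists_clm_eq_self_on_left_eq_zero_on_right hP hQ hPQ hK
  orthogonal_sup_orthogonal_eq_top_of_clm T hTP hTQ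

end Submodule

theorem ContinuousLinearMap.ker_eq_orthogonal_closure_range_adjoint {𝕜 E F : Type*} [RCLike 𝕜]
    [NormedAddCommGroup E] [InnerProductSpace 𝕜 E] [CompleteSpace E] [NormedAddCommGroup F]
    [InnerProductSpace 𝕜 F] [CompleteSpace F] (T : E →L[𝕜] F) :
    T.ker = (adjoint T).range.topologicalClosureᗮ := by
  rw [Submodule.orthogonal_closure, orthogonal_range, adjoint_adjoint]

variable {H : Type*} [NormedAddCommGroup H] [InnerProductSpace ℂ H] [CompleteSpace H]

/-- If the closures of `R(A*)` and `R(B*)` intersect trivially and their (direct) sum is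
closed, then `N(A) + N(B) = H`; and if `N(A) + N(B) = H`, then
`R(A+B) = R(A) + R(B)`. -/
theorem closed_adjoint_sum_imp_ker_sum_imp_range_additivity (A B : H →L[ℂ] H) :
    (((LinearMap.range ((adjoint A : H →L[ℂ] H) : H →ₗ[ℂ] H)).topologicalClosure ⊓
        (LinearMap.range ((adjoint B : H →L[ℂ] H) : H →ₗ[ℂ] H)).topologicalClosure = ⊥ ∧
      IsClosed (((LinearMap.range ((adjoint A : H →L[ℂ] H) : H →ₗ[ℂ] H)).topologicalClosure ⊔
        (LinearMap.range ((adjoint B : H →L[ℂ] H) : H →ₗ[ℂ] H)).topologicalClosure : Submodule ℂ H) : Set H)) →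
      LinearMap.ker (A : H →ₗ[ℂ] H) ⊔ LinearMap.ker (B : H →ₗ[ℂ] H) = ⊤) ∧
    (LinearMap.ker (A : H →ₗ[ℂ] H) ⊔ LinearMap.ker (B : H →ₗ[ℂ] H) = ⊤ →
      LinearMap.range ((A + B : H →L[ℂ] H) : H →ₗ[ℂ] H) = LinearMap.range (A : H →ₗ[ℂ] H) ⊔ LinearMap.range (B : H →ₗ[ℂ] H)) := by
  refine ⟨fun ⟨hinf, hsup⟩ ↦ ?_, fun h ↦ ?_⟩
  · rw [A.ker_eq_orthogonal_closure_range_adjoint, B.ker_eq_orthogonal_closure_range_adjoint]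
    exact Submodule.orthogonal_sup_orthogonal_eq_top (Submodule.isClosed_topologicalClosure _)
      (Submodule.isClosed_topologicalClosure _) hinf hsup
  · rw [toLinearMap_add]
    exact LinearMap.range_add_eq_sup_of_ker_sup_eq_top _ _ h
end

section
/- For positive bounded operators A, B on a Hilbert space H, R(A+B) = R(A) + R(B) if and only if (A+B)^2 and A^2 + B^2 are Thompson equivalent, i.e., there exist positive reals r, s with r(A+B)^2 ≤ A^2 + B^2 ≤ s(A+B)^2. -/
/-!
Douglas' lemma: `R(T) ⊆ R(S)` iff `T T† ≤ s • S S†` for some `s > 0`; the forward direction is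
Banach–Steinhaus, the converse Hahn–Banach and Riesz. The row operator `S (u, v) = A u + B v` on
`H ⊕ H` has range `R(A) + R(B)` and satisfies `S S† = A² + B²`. Since `R(A + B) ⊆ R(A) + R(B)`
always holds, range additivity means `R(S) ⊆ R(A + B)`, which by Douglas is the upper Thompson
bound; the lower one `(A + B)² / 2 ≤ A² + B²` always holds, the difference being `(A - B)² / 2`.
-/

open ContinuousLinearMap
open scoped InnerProduct InnerProductSpace

variable {H : Type*} [NormedAddCommGroup H] [InnerProductSpace ℂ H] [CompleteSpace H]

theorem LinearMap.exists_comp_rangeRestrict_eq {R M N P : Type*} [Ring R] [AddCommGroup M]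
    [AddCommGroup N] [AddCommGroup P] [Module R M] [Module R N] [Module R P]
    (f : M →ₗ[R] N) (g : M →ₗ[R] P) (h : LinearMap.ker f ≤ LinearMap.ker g) :
    ∃ φ : LinearMap.range f →ₗ[R] P, φ ∘ₗ f.rangeRestrict = g :=
  ⟨(LinearMap.ker f).liftQ g h ∘ₗ f.quotKerEquivRange.symm.toLinearMap, by
    ext m
    have hm : f.rangeRestrict m = f.quotKerEquivRange (Submodule.Quotient.mk m) :=
      Subtype.ext (f.quotKerEquivRange_apply_mk m).symm
    simp [hm]⟩

namespace ContinuousLinearMap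

section Douglas

variable {𝕜 E F G : Type*} [RCLike 𝕜]
  [NormedAddCommGroup E] [InnerProductSpace 𝕜 E] [CompleteSpace E]
  [NormedAddCommGroup F] [InnerProductSpace 𝕜 F] [CompleteSpace F]
  [NormedAddCommGroup G] [InnerProductSpace 𝕜 G] [CompleteSpace G]

theorem mem_range_of_norm_inner_le (S : E →L[𝕜] F) {y : F} {c : ℝ}
    (hy : ∀ z, ‖inner 𝕜 y z‖ ≤ c * ‖(S†) z‖) : y ∈ LinearMap.range (S : E →ₗ[𝕜] F) := by
  have hker : LinearMap.ker (S† : F →ₗ[𝕜] E) ≤ LinearMap.ker (innerSL 𝕜 y : F →ₗ[𝕜] 𝕜) := by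
    intro z hz
    simpa [show (S†) z = 0 from hz] using hy z
  obtain ⟨φ, hφ⟩ := LinearMap.exists_comp_rangeRestrict_eq _ _ hker
  have hφ_apply (z : F) : φ ⟨(S†) z, z, rfl⟩ = inner 𝕜 y z := LinearMap.congr_fun hφ z
  have hφ_bound (w : LinearMap.range (S† : F →ₗ[𝕜] E)) : ‖φ w‖ ≤ c * ‖w‖ := by
    obtain ⟨_, z, rfl⟩ := w
    simpa [hφ_apply] using hy z
  obtain ⟨ψ, hψ, -⟩ := exists_extension_norm_eq _ (φ.mkContinuous c hφ_bound)
  refine ⟨(InnerProductSpace.toDual 𝕜 E).symm ψ, ext_inner_right 𝕜 fun z => ?_⟩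
  rw [coe_coe, ← adjoint_inner_right, InnerProductSpace.toDual_symm_apply]
  exact (hψ ⟨(S†) z, z, rfl⟩).trans (hφ_apply z)

theorem range_le_range_of_norm_adjoint_le (T : E →L[𝕜] F) (S : G →L[𝕜] F) {c : ℝ}
    (h : ∀ z, ‖(T†) z‖ ≤ c * ‖(S†) z‖) :
    LinearMap.range (T : E →ₗ[𝕜] F) ≤ LinearMap.range (S : G →ₗ[𝕜] F) := by
  rintro _ ⟨x, rfl⟩
  refine mem_range_of_norm_inner_le S (c := ‖x‖ * c) fun z => ?_
  calc ‖inner 𝕜 (T x) z‖ ≤ ‖x‖ * ‖(T†) z‖ := by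
        rw [← adjoint_inner_right]; exact norm_inner_le_norm _ _
    _ ≤ ‖x‖ * (c * ‖(S†) z‖) := by gcongr; exact h z
    _ = ‖x‖ * c * ‖(S†) z‖ := by ring

theorem exists_norm_adjoint_le_of_range_le (T : E →L[𝕜] F) (S : G →L[𝕜] F)
    (h : LinearMap.range (T : E →ₗ[𝕜] F) ≤ LinearMap.range (S : G →ₗ[𝕜] F)) :
    ∃ c, ∀ z, ‖(T†) z‖ ≤ c * ‖(S†) z‖ := by
  choose u hu using fun x => h (LinearMap.mem_range_self (T : E →ₗ[𝕜] F) x)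
  have hinner (z : F) (x : E) : ‖inner 𝕜 ((T†) z) x‖ ≤ ‖u x‖ * ‖(S†) z‖ := by
    rw [adjoint_inner_left, ← coe_coe, ← hu x, coe_coe, ← adjoint_inner_left, mul_comm]
    exact norm_inner_le_norm _ _
  -- The functionals `⟪T† z, ·⟫ / ‖S† z‖` are pointwise bounded, hence uniformly bounded.
  obtain ⟨C, hC⟩ := banach_steinhaus (g := fun z : F => ‖(S†) z‖⁻¹ • innerSL 𝕜 ((T†) z))
    fun x => ⟨‖u x‖, fun z => by
      rw [smul_apply, norm_smul, norm_inv, norm_norm, innerSL_apply_apply]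
      calc ‖(S†) z‖⁻¹ * ‖inner 𝕜 ((T†) z) x‖ ≤ ‖(S†) z‖⁻¹ * (‖u x‖ * ‖(S†) z‖) := by
            gcongr; exact hinner z x
        _ ≤ ‖u x‖ := by
            rw [mul_left_comm]
            exact mul_le_of_le_one_right (norm_nonneg _)
              (inv_mul_le_one_of_le₀ le_rfl (norm_nonneg _))⟩
  refine ⟨C, fun z => ?_⟩
  rcases eq_or_ne ((S†) z) 0 with hz | hz
  · have hTz : (T†) z = 0 := by simpa [hz] using hinner z ((T†) z)
    simp [hTz, hz]
  · have hCz := hC z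
    rw [norm_smul, norm_inv, norm_norm, innerSL_apply_norm,
      inv_mul_le_iff₀ (norm_pos_iff.mpr hz)] at hCz
    linarith

theorem range_le_range_iff_exists_norm_adjoint_le (T : E →L[𝕜] F) (S : G →L[𝕜] F) :
    LinearMap.range (T : E →ₗ[𝕜] F) ≤ LinearMap.range (S : G →ₗ[𝕜] F) ↔
      ∃ c, ∀ z, ‖(T†) z‖ ≤ c * ‖(S†) z‖ :=
  ⟨exists_norm_adjoint_le_of_range_le T S, fun ⟨_, h⟩ => range_le_range_of_norm_adjoint_le T S h⟩

theorem reApplyInnerSelf_comp_adjoint (T : E →L[𝕜] F) (z : F) :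
    (T ∘L T†).reApplyInnerSelf z = ‖(T†) z‖ ^ 2 := by
  rw [reApplyInnerSelf_apply, apply_norm_sq_eq_inner_adjoint_left, adjoint_adjoint]

theorem comp_adjoint_le_smul_comp_adjoint_iff (T : E →L[𝕜] F) (S : G →L[𝕜] F) (s : ℝ) :
    T ∘L T† ≤ (s : 𝕜) • (S ∘L S†) ↔ ∀ z, ‖(T†) z‖ ^ 2 ≤ s * ‖(S†) z‖ ^ 2 := by
  have hsa : IsSelfAdjoint ((s : 𝕜) • (S ∘L S†) - T ∘L T†) :=
    (IsSelfAdjoint.smul (RCLike.conj_ofReal s) (isPositive_self_comp_adjoint S).isSelfAdjoint).sub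
      (isPositive_self_comp_adjoint T).isSelfAdjoint
  rw [le_def, isPositive_def', and_iff_right hsa]
  refine forall_congr' fun z => ?_
  rw [← sub_nonneg, ← reApplyInnerSelf_comp_adjoint, ← reApplyInnerSelf_comp_adjoint]
  simp [reApplyInnerSelf_apply, inner_sub_left, inner_smul_real_left, RCLike.smul_re]

theorem range_le_range_iff_exists_comp_adjoint_le (T : E →L[𝕜] F) (S : G →L[𝕜] F) :
    LinearMap.range (T : E →ₗ[𝕜] F) ≤ LinearMap.range (S : G →ₗ[𝕜] F) ↔
      ∃ s : ℝ, 0 < s ∧ T ∘L T† ≤ (s : 𝕜) • (S ∘L S†) := by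
  simp_rw [range_le_range_iff_exists_norm_adjoint_le, comp_adjoint_le_smul_comp_adjoint_iff]
  constructor
  · rintro ⟨c, hc⟩
    refine ⟨c ^ 2 + 1, by positivity, fun z => ?_⟩
    calc ‖(T†) z‖ ^ 2 ≤ (c * ‖(S†) z‖) ^ 2 := pow_le_pow_left₀ (norm_nonneg _) (hc z) 2
      _ ≤ (c ^ 2 + 1) * ‖(S†) z‖ ^ 2 := by nlinarith [sq_nonneg ‖(S†) z‖]
  · rintro ⟨s, hs, h⟩
    refine ⟨√s, fun z => ?_⟩
    rw [← Real.sqrt_sq (norm_nonneg ((T†) z)), ← Real.sqrt_sq (norm_nonneg ((S†) z)),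
      ← Real.sqrt_mul hs.le]
    exact Real.sqrt_le_sqrt (h z)

end Douglas

section CoprodL2

variable {𝕜 E₁ E₂ F : Type*} [RCLike 𝕜]
  [NormedAddCommGroup E₁] [InnerProductSpace 𝕜 E₁]
  [NormedAddCommGroup E₂] [InnerProductSpace 𝕜 E₂]
  [NormedAddCommGroup F] [InnerProductSpace 𝕜 F]

noncomputable def coprodL2 (A : E₁ →L[𝕜] F) (B : E₂ →L[𝕜] F) : WithLp 2 (E₁ × E₂) →L[𝕜] F :=
  A.coprod B ∘L (WithLp.prodContinuousLinearEquiv 2 𝕜 E₁ E₂ : WithLp 2 (E₁ × E₂) →L[𝕜] E₁ × E₂)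

variable (A : E₁ →L[𝕜] F) (B : E₂ →L[𝕜] F)

theorem coprodL2_apply (w : WithLp 2 (E₁ × E₂)) : coprodL2 A B w = A w.fst + B w.snd := rfl

theorem range_coprodL2 :
    LinearMap.range (coprodL2 A B : WithLp 2 (E₁ × E₂) →ₗ[𝕜] F) =
      LinearMap.range (A : E₁ →ₗ[𝕜] F) ⊔ LinearMap.range (B : E₂ →ₗ[𝕜] F) := by
  refine (LinearMap.range_comp_of_range_eq_top _ ?_).trans (range_coprod A B)
  exact LinearMap.range_eq_top.mpr (WithLp.prodContinuousLinearEquiv 2 𝕜 E₁ E₂).surjective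

variable [CompleteSpace E₁] [CompleteSpace E₂] [CompleteSpace F]

theorem adjoint_coprodL2_apply (z : F) :
    ((coprodL2 A B)†) z = WithLp.toLp 2 ((A†) z, (B†) z) := by
  refine ext_inner_left 𝕜 fun w => ?_
  rw [adjoint_inner_right, coprodL2_apply, inner_add_left, WithLp.prod_inner_apply,
    ← adjoint_inner_right, ← adjoint_inner_right]
  rfl

theorem coprodL2_comp_adjoint :
    coprodL2 A B ∘L (coprodL2 A B)† = A ∘L A† + B ∘L B† := by
  ext z
  simp [coprodL2_apply, adjoint_coprodL2_apply]

end CoprodL2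

theorem half_smul_add_comp_add_le {A B : H →L[ℂ] H} (hA : IsSelfAdjoint A)
    (hB : IsSelfAdjoint B) :
    (2⁻¹ : ℝ) • ((A + B) ∘L (A + B)) ≤ A ∘L A + B ∘L B := by
  have hdiff : A ∘L A + B ∘L B - (2⁻¹ : ℝ) • ((A + B) ∘L (A + B)) =
      ((2⁻¹ : ℝ) : ℂ) • ((A - B)† ∘L (A - B)) := by
    rw [(hA.sub hB).adjoint_eq, Complex.coe_smul]
    ext x
    simp only [sub_apply, add_apply, smul_apply, comp_apply, map_add, map_sub]
    module
  rw [le_def, hdiff]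
  exact (isPositive_adjoint_comp_self _).smul_of_nonneg (Complex.zero_le_real.mpr (by norm_num))

end ContinuousLinearMap

/-- For positive operators `A, B`, range additivity `R(A+B) = R(A) + R(B)` holds iff
`(A+B)²` and `A² + B²` are Thompson equivalent: there are `r, s > 0` with
`r (A+B)² ≤ A² + B² ≤ s (A+B)²` in the Löwner order. -/
theorem range_additivity_iff_thompson (A B : H →L[ℂ] H)
    (hA : A.IsPositive) (hB : B.IsPositive) :
    LinearMap.range ((A + B : H →L[ℂ] H) : H →ₗ[ℂ] H) = LinearMap.range (A : H →ₗ[ℂ] H) ⊔ LinearMap.range (B : H →ₗ[ℂ] H) ↔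
      ∃ r s : ℝ, 0 < r ∧ 0 < s ∧
        ((A ∘L A + B ∘L B) - r • ((A + B) ∘L (A + B))).IsPositive ∧
        (s • ((A + B) ∘L (A + B)) - (A ∘L A + B ∘L B)).IsPositive := by
  have hA' := hA.isSelfAdjoint
  have hB' := hB.isSelfAdjoint
  have hrange_le : LinearMap.range (A : H →ₗ[ℂ] H) ⊔ LinearMap.range (B : H →ₗ[ℂ] H) ≤
        LinearMap.range ((A + B : H →L[ℂ] H) : H →ₗ[ℂ] H) ↔
      ∃ s : ℝ, 0 < s ∧ A ∘L A + B ∘L B ≤ s • ((A + B) ∘L (A + B)) := by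
    rw [← range_coprodL2, range_le_range_iff_exists_comp_adjoint_le, coprodL2_comp_adjoint,
      hA'.adjoint_eq, hB'.adjoint_eq, (hA'.add hB').adjoint_eq]
    simp_rw [← RCLike.real_smul_eq_coe_smul (K := ℂ)]
  constructor
  · intro h
    obtain ⟨s, hs, hle⟩ := hrange_le.mp h.ge
    exact ⟨2⁻¹, s, by norm_num, hs, half_smul_add_comp_add_le hA' hB', hle⟩
  · rintro ⟨-, s, -, hs, -, hle⟩
    exact le_antisymm (LinearMap.range_add_le _ _) (hrange_le.mpr ⟨s, hs, hle⟩)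
end

section
/- Let A be a positive bounded operator on a Hilbert space H and S a closed subspace with orthogonal projection P_S. Then (A, S) is compatible (i.e., S + (A(S))^⊥ = H) if and only if R(A + (I − P_S)) = R(A) + R(I − P_S) = R(A) + S^⊥. -/
/-!
Write `Q = 1 - P_S`. Since `(A S)ᗮ = ker (P_S A)`, compatibility says that every `Q x` is `Q w`
for some `w` with `P_S A w = 0`, i.e. `R(Q) ⊆ R(P_S A + Q)`; range additivity amounts to
`R(Q) ⊆ R(A + Q)`. By Douglas' lemma these inclusions are factorizations `(P_S A + Q) K = Q` and
`(A + Q) G = Q` in the C⋆-algebra `L(H)`, and each factorization yields the other after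
correcting by an invertible positive operator: `(A + Q) K = Q (1 + K⋆ A K)`, and
`(P_S A + Q) G Q = Q (P_S + Q G Q)`, where `P_S + Q G Q` is bounded below because
`(A + Q)² ≤ ‖A + Q‖ (A + Q)`.
-/

open ContinuousLinearMap

/-- `P` is the orthogonal projection onto the closed subspace `S`: a selfadjoint
idempotent with range `S`. -/
def IsOrthoProj {E : Type*} [NormedAddCommGroup E] [InnerProductSpace ℂ E] [CompleteSpace E]
    (P : E →L[ℂ] E) (S : Submodule ℂ E) : Prop :=
  IsIdempotentElem P ∧ IsSelfAdjoint P ∧ LinearMap.range (P : E →ₗ[ℂ] E) = S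

variable {H : Type*} [NormedAddCommGroup H] [InnerProductSpace ℂ H] [CompleteSpace H]

theorem LinearMap.range_add_eq_sup_iff {R M N : Type*} [Ring R] [AddCommGroup M] [Module R M]
    [AddCommGroup N] [Module R N] (f g : M →ₗ[R] N) :
    LinearMap.range (f + g) = LinearMap.range f ⊔ LinearMap.range g ↔
      LinearMap.range g ≤ LinearMap.range (f + g) := by
  refine ⟨fun h ↦ h ▸ le_sup_right, fun h ↦ le_antisymm (LinearMap.range_add_le f g) ?_⟩
  refine sup_le (fun _ ⟨x, hx⟩ ↦ ?_) h
  obtain ⟨y, hy⟩ := h ⟨x, rfl⟩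
  exact hx ▸ ⟨x - y, by rw [map_sub, hy, LinearMap.add_apply, add_sub_cancel_right]⟩

theorem ContinuousLinearMap.exists_eq_comp_of_range_le {𝕜 E F G : Type*} [RCLike 𝕜]
    [NormedAddCommGroup E] [NormedSpace 𝕜 E]
    [NormedAddCommGroup F] [NormedSpace 𝕜 F] [CompleteSpace F]
    [NormedAddCommGroup G] [InnerProductSpace 𝕜 G] [CompleteSpace G]
    {f : F →L[𝕜] E} {g : G →L[𝕜] E}
    (h : LinearMap.range (f : F →ₗ[𝕜] E) ≤ LinearMap.range (g : G →ₗ[𝕜] E)) :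
    ∃ d : F →L[𝕜] G, f = g ∘L d := by
  set N := LinearMap.ker (g : G →ₗ[𝕜] E)
  have : CompleteSpace N := g.isClosed_ker.completeSpace_coe
  set g' : Nᗮ →L[𝕜] E := g ∘L Nᗮ.subtypeL
  have hinj : Function.Injective g' := (injective_iff_map_eq_zero g').2 fun x hx ↦
    Subtype.ext <| Submodule.disjoint_def.1 N.orthogonal_disjoint x hx x.2
  have hrange (x : F) : f x ∈ LinearMap.range (g' : Nᗮ →ₗ[𝕜] E) := by
    obtain ⟨y, hy⟩ := h ⟨x, rfl⟩
    obtain ⟨u, hu, v, hv, rfl⟩ := N.exists_add_mem_mem_orthogonal y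
    refine ⟨⟨v, hv⟩, ?_⟩
    simpa [g', show g u = 0 from hu] using hy
  set e := LinearEquiv.ofInjective (g' : Nᗮ →ₗ[𝕜] E) hinj
  set d₀ : F →ₗ[𝕜] Nᗮ := e.symm.toLinearMap ∘ₗ (f : F →ₗ[𝕜] E).codRestrict _ hrange
  have hd₀ (x : F) : g' (d₀ x) = f x := congrArg Subtype.val (e.apply_symm_apply _)
  have hgraph : (d₀.graph : Set (F × Nᗮ)) = {p | g' p.2 = f p.1} := by
    ext ⟨x, z⟩
    rw [SetLike.mem_coe, LinearMap.mem_graph_iff, Set.mem_ofPred_eq]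
    exact ⟨fun hz ↦ hz ▸ hd₀ x, fun hz ↦ hinj (hz.trans (hd₀ x).symm)⟩
  have hclosed : IsClosed (d₀.graph : Set (F × Nᗮ)) :=
    hgraph ▸ isClosed_eq (by fun_prop) (by fun_prop)
  exact ⟨Nᗮ.subtypeL ∘L ContinuousLinearMap.ofIsClosedGraph hclosed,
    ContinuousLinearMap.ext fun x ↦ (hd₀ x).symm⟩

theorem IsIdempotentElem.mul_add_one_sub_mul_eq_one_sub_iff {R : Type*} [Ring R] {p a k : R}
    (hp : IsIdempotentElem p) :
    (p * a + (1 - p)) * k = 1 - p ↔ p * a * k = 0 ∧ (1 - p) * k = 1 - p := by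
  refine ⟨fun hk ↦ ⟨?_, ?_⟩, fun ⟨h₁, h₂⟩ ↦ by rw [add_mul, h₁, h₂, zero_add]⟩
  · simpa only [mul_add, ← mul_assoc, hp.eq, hp.mul_one_sub_self, add_zero] using
      congrArg (p * ·) hk
  · simpa only [mul_add, ← mul_assoc, hp.one_sub_mul_self, zero_mul, zero_add, hp.one_sub.eq] using
      congrArg ((1 - p) * ·) hk

section CStarAlgebra

variable {B : Type*} [CStarAlgebra B] [PartialOrder B] [StarOrderedRing B]

theorem CStarAlgebra.mul_self_le_norm_smul_of_nonneg {t : B} (ht : 0 ≤ t) : t * t ≤ ‖t‖ • t := by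
  set s := CFC.sqrt t
  have hss : s * s = t := CFC.sqrt_mul_sqrt_self t
  have hs : star s = s := (CFC.sqrt_nonneg t).star_eq
  calc t * t = star s * t * s := by rw [hs, ← hss, mul_assoc, mul_assoc, mul_assoc]
    _ ≤ ‖t‖ • (star s * s) := CStarAlgebra.star_left_conjugate_le_norm_smul
    _ = ‖t‖ • t := by rw [hs, hss]

namespace IsStarProjection

variable {p a : B}

theorem exists_add_one_sub_mul_eq_one_sub_of_mul_add (hp : IsStarProjection p) (ha : 0 ≤ a)
    {k : B} (hk : (p * a + (1 - p)) * k = 1 - p) : ∃ g, (a + (1 - p)) * g = 1 - p := by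
  obtain ⟨hpak, hqk⟩ := hp.isIdempotentElem.mul_add_one_sub_mul_eq_one_sub_iff.mp hk
  have hstar : star k = (1 - p) + star k * p := by
    have := congrArg star (show k = (1 - p) + p * k by rw [← hqk]; noncomm_ring)
    rwa [star_add, star_mul, star_sub, star_one, hp.isSelfAdjoint.star_eq] at this
  -- `k - (1 - p)` takes values in the range of `p`, to which `a * k` is orthogonal
  have hconj : star k * a * k = (1 - p) * a * k := by
    calc star k * a * k = (1 - p) * a * k + star k * (p * a * k) := by
          nth_rewrite 1 [hstar]; noncomm_ring
      _ = (1 - p) * a * k := by rw [hpak, mul_zero, add_zero]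
  have hfac : (a + (1 - p)) * k = (1 - p) * (1 + star k * a * k) := by
    calc (a + (1 - p)) * k = p * a * k + (1 - p) * a * k + (1 - p) * k := by noncomm_ring
      _ = (1 - p) * (1 + star k * a * k) := by
          rw [hpak, hqk, hconj, mul_add, mul_one, ← mul_assoc, ← mul_assoc,
            hp.one_sub.isIdempotentElem.eq, zero_add, add_comm]
  have hunit : IsUnit (1 + star k * a * k) :=
    (isStrictlyPositive_one.add_nonneg (star_left_conjugate_nonneg ha k)).isUnit
  exact ⟨k * ↑hunit.unit⁻¹, by rw [← mul_assoc, hfac, mul_assoc, hunit.mul_val_inv, mul_one]⟩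

theorem isStrictlyPositive_add_one_sub_mul_mul_one_sub (hp : IsStarProjection p) {t g : B}
    (ht : 0 ≤ t) (hg : t * g = 1 - p) : IsStrictlyPositive (p + (1 - p) * g * (1 - p)) := by
  set q := 1 - p with hq
  have hqs : star q = q := hp.one_sub.isSelfAdjoint.star_eq
  have hqq : q * q = q := hp.one_sub.isIdempotentElem.eq
  have hconj : star (g * q) * t * (g * q) = q * g * q := by
    have hgt : star g * t = q := by rw [← ht.star_eq, ← star_mul, hg, hqs]
    rw [star_mul, hqs, mul_assoc q, hgt, ← mul_assoc, hqq]
  have htgq : t * (g * q) = q := by rw [← mul_assoc, hg, hqq]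
  have hq_le : q ≤ ‖t‖ • (q * g * q) := by
    calc q = star (t * (g * q)) * (t * (g * q)) := by rw [htgq, hqs, hqq]
      _ = star (g * q) * (t * t) * (g * q) := by
          rw [star_mul t, ht.star_eq, mul_assoc, mul_assoc, mul_assoc]
      _ ≤ star (g * q) * (‖t‖ • t) * (g * q) :=
          star_left_conjugate_le_conjugate (CStarAlgebra.mul_self_le_norm_smul_of_nonneg ht) _
      _ = ‖t‖ • (q * g * q) := by rw [mul_smul_comm, smul_mul_assoc, hconj]
  have hqgq : 0 ≤ q * g * q := hconj ▸ star_left_conjugate_nonneg ht _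
  have h1 : 1 ≤ (1 + ‖t‖) • (p + q * g * q) := by
    calc (1 : B) = p + q := by rw [hq]; abel
      _ ≤ (p + ‖t‖ • p) + (q * g * q + ‖t‖ • (q * g * q)) := by
        gcongr
        · exact le_add_of_nonneg_right (smul_nonneg (norm_nonneg t) hp.nonneg)
        · exact le_add_of_nonneg_left hqgq |>.trans' hq_le
      _ = (1 + ‖t‖) • (p + q * g * q) := by simp only [smul_add, add_smul, one_smul]
  have hr : (0 : ℝ) < 1 + ‖t‖ := by positivity
  simpa [inv_smul_smul₀ hr.ne'] using (isStrictlyPositive_one.of_le h1).smul (inv_pos.mpr hr)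

theorem exists_mul_add_one_sub_mul_eq_one_sub_of_add (hp : IsStarProjection p) (ha : 0 ≤ a)
    {g : B} (hg : (a + (1 - p)) * g = 1 - p) : ∃ k, (p * a + (1 - p)) * k = 1 - p := by
  have hpag : p * a * g = 0 := by
    simpa only [mul_add, ← mul_assoc, hp.mul_one_sub_self, add_zero] using congrArg (p * ·) hg
  have hz := (hp.isStrictlyPositive_add_one_sub_mul_mul_one_sub
    (add_nonneg ha hp.one_sub_nonneg) hg).isUnit
  have hfac : (p * a + (1 - p)) * (g * (1 - p)) =
      (1 - p) * (p + (1 - p) * g * (1 - p)) := by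
    calc (p * a + (1 - p)) * (g * (1 - p)) = p * a * g * (1 - p) + (1 - p) * g * (1 - p) := by
          noncomm_ring
      _ = (1 - p) * (p + (1 - p) * g * (1 - p)) := by
          rw [hpag, zero_mul, zero_add, mul_add, hp.one_sub_mul_self, zero_add, ← mul_assoc,
            ← mul_assoc, hp.one_sub.isIdempotentElem.eq]
  exact ⟨g * (1 - p) * ↑hz.unit⁻¹, by rw [← mul_assoc, hfac, mul_assoc, hz.mul_val_inv, mul_one]⟩

theorem exists_add_one_sub_mul_eq_one_sub_iff (hp : IsStarProjection p) (ha : 0 ≤ a) :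
    (∃ g, (a + (1 - p)) * g = 1 - p) ↔ ∃ k, (p * a + (1 - p)) * k = 1 - p :=
  ⟨fun ⟨_, hg⟩ ↦ hp.exists_mul_add_one_sub_mul_eq_one_sub_of_add ha hg,
    fun ⟨_, hk⟩ ↦ hp.exists_add_one_sub_mul_eq_one_sub_of_mul_add ha hk⟩

end IsStarProjection

end CStarAlgebra

namespace ContinuousLinearMap

variable {𝕜 E : Type*} [RCLike 𝕜] [NormedAddCommGroup E] [InnerProductSpace 𝕜 E] [CompleteSpace E]

theorem range_le_range_iff_exists_mul_eq {f g : E →L[𝕜] E} :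
    LinearMap.range (f : E →ₗ[𝕜] E) ≤ LinearMap.range (g : E →ₗ[𝕜] E) ↔ ∃ d, g * d = f :=
  ⟨fun h ↦ (exists_eq_comp_of_range_le h).imp fun _ hd ↦ hd.symm,
    fun ⟨d, hd⟩ ↦ hd ▸ LinearMap.range_comp_le_range (d : E →ₗ[𝕜] E) (g : E →ₗ[𝕜] E)⟩

theorem IsStarProjection.range_one_sub {P : E →L[𝕜] E} (hP : IsStarProjection P) :
    LinearMap.range ((1 - P : E →L[𝕜] E) : E →ₗ[𝕜] E) = (LinearMap.range (P : E →ₗ[𝕜] E))ᗮ := by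
  rw [IsStarNormal.orthogonal_range
    (isStarProjection_iff_isIdempotentElem_and_isStarNormal.mp hP).2]
  exact (LinearMap.IsIdempotentElem.ker_eq_range_one_sub
    (IsIdempotentElem.toLinearMap hP.isIdempotentElem)).symm

theorem orthogonal_map_range_eq_ker_mul {P A : E →L[𝕜] E} (hP : IsSelfAdjoint P)
    (hA : IsSelfAdjoint A) :
    (Submodule.map (A : E →ₗ[𝕜] E) (LinearMap.range (P : E →ₗ[𝕜] E)))ᗮ =
      LinearMap.ker ((P * A : E →L[𝕜] E) : E →ₗ[𝕜] E) := by
  rw [← LinearMap.range_comp]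
  have := (A * P).orthogonal_range
  rw [← star_eq_adjoint, star_mul, hP.star_eq, hA.star_eq] at this
  exact this

theorem IsStarProjection.range_sup_ker_mul_eq_top_iff {P A : E →L[𝕜] E} (hP : IsStarProjection P) :
    LinearMap.range (P : E →ₗ[𝕜] E) ⊔ LinearMap.ker ((P * A : E →L[𝕜] E) : E →ₗ[𝕜] E) = ⊤ ↔
      LinearMap.range ((1 - P : E →L[𝕜] E) : E →ₗ[𝕜] E) ≤
        LinearMap.range ((P * A + (1 - P) : E →L[𝕜] E) : E →ₗ[𝕜] E) := by
  have hPP (x : E) : P (P x) = P x := congr($(hP.isIdempotentElem.eq) x)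
  constructor
  · rintro htop _ ⟨x, rfl⟩
    obtain ⟨_, ⟨y, rfl⟩, w, hw, hx⟩ := Submodule.mem_sup.mp (htop ▸ Submodule.mem_top : x ∈ _)
    refine ⟨w, ?_⟩
    replace hw : P (A w) = 0 := hw
    simp [← hx, hPP, hw]
  · intro hle
    refine Submodule.eq_top_iff'.mpr fun x ↦ ?_
    obtain ⟨w, hw⟩ := hle ⟨x, rfl⟩
    have hPw : P (A w) = 0 := by simpa [hPP] using congr(P $hw)
    have hQw : w - P w = x - P x := by simpa [hPP, hPw] using congr((1 - P) $hw)
    exact Submodule.mem_sup.mpr ⟨P (x - w), ⟨_, rfl⟩, w, hPw, by rw [map_sub]; grind⟩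

end ContinuousLinearMap

theorem compatible_iff_range_additivity_proj_general (A : H →L[ℂ] H) (hA : A.IsPositive)
    (S : Submodule ℂ H)
    (PS : H →L[ℂ] H) (hPS : IsOrthoProj PS S) :
    S ⊔ (Submodule.map (A : H →ₗ[ℂ] H) S)ᗮ = ⊤ ↔
      (LinearMap.range ((A + (1 - PS) : H →L[ℂ] H) : H →ₗ[ℂ] H) = LinearMap.range (A : H →ₗ[ℂ] H) ⊔ LinearMap.range ((1 - PS : H →L[ℂ] H) : H →ₗ[ℂ] H) ∧
        LinearMap.range (A : H →ₗ[ℂ] H) ⊔ LinearMap.range ((1 - PS : H →L[ℂ] H) : H →ₗ[ℂ] H) = LinearMap.range (A : H →ₗ[ℂ] H) ⊔ Sᗮ) := by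
  obtain ⟨hidem, hsa, rfl⟩ := hPS
  have hP : IsStarProjection PS := ⟨hidem, hsa⟩
  have hA₀ : 0 ≤ A := (nonneg_iff_isPositive A).mpr hA
  rw [← hP.range_one_sub, and_iff_left rfl, orthogonal_map_range_eq_ker_mul hsa hA.isSelfAdjoint,
    hP.range_sup_ker_mul_eq_top_iff, toLinearMap_add A, LinearMap.range_add_eq_sup_iff,
    ← toLinearMap_add, range_le_range_iff_exists_mul_eq, range_le_range_iff_exists_mul_eq]
  exact (hP.exists_add_one_sub_mul_eq_one_sub_iff hA₀).symm

/-- `(A, S)` is compatible (`S + (A(S))^⊥ = H`) iff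
`R(A + (I - P_S)) = R(A) + R(I - P_S) = R(A) + S^⊥`. -/
theorem compatible_iff_range_additivity_proj (A : H →L[ℂ] H) (hA : A.IsPositive)
    (S : Submodule ℂ H) (hS : IsClosed (S : Set H))
    (PS : H →L[ℂ] H) (hPS : IsOrthoProj PS S) :
    S ⊔ (Submodule.map (A : H →ₗ[ℂ] H) S)ᗮ = ⊤ ↔
      (LinearMap.range ((A + (1 - PS) : H →L[ℂ] H) : H →ₗ[ℂ] H) = LinearMap.range (A : H →ₗ[ℂ] H) ⊔ LinearMap.range ((1 - PS : H →L[ℂ] H) : H →ₗ[ℂ] H) ∧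
        LinearMap.range (A : H →ₗ[ℂ] H) ⊔ LinearMap.range ((1 - PS : H →L[ℂ] H) : H →ₗ[ℂ] H) = LinearMap.range (A : H →ₗ[ℂ] H) ⊔ Sᗮ) :=
  compatible_iff_range_additivity_proj_general A hA S PS hPS
end
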